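/- Let (S, 𝒮, μ) be a finite measure space and f : ℝ → ℝ a C^1 function such that f′ has linear growth. Then the functional F(u) = ∫_S f(u(x)) dμ(x) on L^2(S, μ) is Fréchet differentiable at every u, with derivative F′(u)(v) = ∫_S f′(u(x)) v(x) dμ(x) for v ∈ L^2(S, μ). -/

import Mathlib

open MeasureTheory Filter

section Aux
variable {f : ℝ → ℝ}

lemma taylor_bound (hf : ContDiff ℝ 1 f) (a b : ℝ) :
    |f (a + b) - f a - deriv f a * b|
      ≤ (∫ t in (0:ℝ)..1, |deriv f (a + t * b) - deriv f a|) * |b| := by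
  have hd := hf.differentiable one_ne_zero
  have hc := hf.continuous_deriv le_rfl
  have key : ∀ t ∈ Set.uIcc (0:ℝ) 1,
      HasDerivAt (fun s => f (a + s * b)) (deriv f (a + t * b) * b) t := by
    intro t _
    have h1 : HasDerivAt (fun s : ℝ => a + s * b) b t := by
      simpa using ((hasDerivAt_id t).mul_const b).const_add a
    exact (hd (a + t * b)).hasDerivAt.comp t h1
  have hcont : Continuous fun t : ℝ => deriv f (a + t * b) * b := by
    exact ((hc.comp (by continuity)).mul continuous_const)
  have hint : IntervalIntegrable (fun t => deriv f (a + t * b) * b) volume 0 1 :=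
    hcont.intervalIntegrable 0 1
  have heq : ∫ t in (0:ℝ)..1, deriv f (a + t * b) * b = f (a + b) - f a := by
    have := intervalIntegral.integral_eq_sub_of_hasDerivAt key hint
    simpa using this
  have heq2 : f (a + b) - f a - deriv f a * b
      = ∫ t in (0:ℝ)..1, (deriv f (a + t * b) - deriv f a) * b := by
    rw [show (fun t => (deriv f (a + t * b) - deriv f a) * b)
        = fun t => deriv f (a + t * b) * b - deriv f a * b from funext fun t => sub_mul _ _ _,
      intervalIntegral.integral_sub hint (intervalIntegrable_const), heq]
    simp
  rw [heq2]
  calc |∫ t in (0:ℝ)..1, (deriv f (a + t * b) - deriv f a) * b|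
      ≤ ∫ t in (0:ℝ)..1, |(deriv f (a + t * b) - deriv f a) * b| :=
        intervalIntegral.abs_integral_le_integral_abs zero_le_one
    _ = ∫ t in (0:ℝ)..1, |deriv f (a + t * b) - deriv f a| * |b| := by
        simp_rw [abs_mul]
    _ = (∫ t in (0:ℝ)..1, |deriv f (a + t * b) - deriv f a|) * |b| := by
        rw [intervalIntegral.integral_mul_const]

lemma h_cont (hf : ContDiff ℝ 1 f) (a b : ℝ) :
    Continuous fun t : ℝ => |deriv f (a + t * b) - deriv f a| := by
  have hc := hf.continuous_deriv le_rfl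
  exact ((hc.comp (by continuity)).sub continuous_const).abs

lemma h_nonneg (a b : ℝ) :
    0 ≤ ∫ t in (0:ℝ)..1, |deriv f (a + t * b) - deriv f a| :=
  intervalIntegral.integral_nonneg zero_le_one (fun t _ => abs_nonneg _)

lemma h_le (hf : ContDiff ℝ 1 f) {C : ℝ} (hC : 0 ≤ C)
    (hg : ∀ t : ℝ, |deriv f t| ≤ C * (1 + |t|)) (a b : ℝ) :
    (∫ t in (0:ℝ)..1, |deriv f (a + t * b) - deriv f a|) ≤ C * (2 + 2 * |a| + |b|) := by
  have hint : IntervalIntegrable (fun t => |deriv f (a + t * b) - deriv f a|) volume 0 1 :=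
    (h_cont hf a b).intervalIntegrable 0 1
  calc (∫ t in (0:ℝ)..1, |deriv f (a + t * b) - deriv f a|)
      ≤ ∫ _t in (0:ℝ)..1, C * (2 + 2 * |a| + |b|) := by
        refine intervalIntegral.integral_mono_on (μ := volume) zero_le_one hint intervalIntegrable_const ?_
        intro t ht
        have h1 : |deriv f (a + t * b)| ≤ C * (1 + |a| + |b|) := by
          refine (hg _).trans ?_
          have : |a + t * b| ≤ |a| + |b| := by
            refine (abs_add_le _ _).trans ?_
            have : |t * b| ≤ |b| := by
              rw [abs_mul]
              calc |t| * |b| ≤ 1 * |b| :=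
                mul_le_mul_of_nonneg_right (abs_le.2 ⟨by linarith [ht.1], ht.2⟩) (abs_nonneg _)
              _ = |b| := one_mul _
            linarith
          nlinarith
        have h2 : |deriv f a| ≤ C * (1 + |a|) := hg a
        calc |deriv f (a + t * b) - deriv f a| ≤ |deriv f (a + t * b)| + |deriv f a| :=
            abs_sub _ _
          _ ≤ C * (1 + |a| + |b|) + C * (1 + |a|) := add_le_add h1 h2
          _ = C * (2 + 2 * |a| + |b|) := by ring
    _ = C * (2 + 2 * |a| + |b|) := by simp

lemma h_tendsto (hf : ContDiff ℝ 1 f) (a : ℝ) {b : ℕ → ℝ} (hb : Tendsto b atTop (nhds 0)) :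
    Tendsto (fun n => ∫ t in (0:ℝ)..1, |deriv f (a + t * b n) - deriv f a|)
      atTop (nhds 0) := by
  have hc := hf.continuous_deriv le_rfl
  rw [NormedAddCommGroup.tendsto_nhds_zero]
  intro ε hε
  obtain ⟨δ, hδ, hδ'⟩ := Metric.continuousAt_iff.mp hc.continuousAt (ε / 2) (half_pos hε)
  have hbn : ∀ᶠ n in atTop, |b n| < δ := by
    have := Metric.tendsto_nhds.mp hb δ hδ
    simpa [Real.dist_eq] using this
  filter_upwards [hbn] with n hn
  have hle : (∫ t in (0:ℝ)..1, |deriv f (a + t * b n) - deriv f a|) ≤ ε / 2 := by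
    calc (∫ t in (0:ℝ)..1, |deriv f (a + t * b n) - deriv f a|)
        ≤ ∫ _t in (0:ℝ)..1, (ε / 2) := by
          refine intervalIntegral.integral_mono_on zero_le_one
            (μ := volume) ((h_cont hf a (b n)).intervalIntegrable 0 1) intervalIntegrable_const ?_
          intro t ht
          have : dist (a + t * b n) a < δ := by
            rw [Real.dist_eq]
            have : |t * b n| ≤ |b n| := by
              rw [abs_mul]
              calc |t| * |b n| ≤ 1 * |b n| :=
                mul_le_mul_of_nonneg_right (abs_le.2 ⟨by linarith [ht.1], ht.2⟩) (abs_nonneg _)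
              _ = |b n| := one_mul _
            simpa using lt_of_le_of_lt this hn
          have := hδ' this
          rw [Real.dist_eq] at this
          exact le_of_lt this
      _ = ε / 2 := by simp
  have hnn := h_nonneg (f := f) a (b n)
  rw [Real.norm_of_nonneg hnn]
  linarith

lemma h_meas {S : Type*} [MeasurableSpace S] (hf : ContDiff ℝ 1 f) {u v : S → ℝ}
    (hu : StronglyMeasurable u) (hv : StronglyMeasurable v) :
    StronglyMeasurable fun x =>
      ∫ t in (0:ℝ)..1, |deriv f (u x + t * v x) - deriv f (u x)| := by
  have hc := hf.continuous_deriv le_rfl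
  have heq : (fun x => ∫ t in (0:ℝ)..1, |deriv f (u x + t * v x) - deriv f (u x)|)
      = fun x => ∫ t, |deriv f (u x + t * v x) - deriv f (u x)|
          ∂(volume.restrict (Set.Ioc (0:ℝ) 1)) := by
    funext x
    rw [intervalIntegral.integral_of_le zero_le_one]
  rw [heq]
  apply StronglyMeasurable.integral_prod_right
  have hsm : StronglyMeasurable fun p : S × ℝ =>
      deriv f (u p.1 + p.2 * v p.1) - deriv f (u p.1) := by
    have h1 : StronglyMeasurable fun p : S × ℝ => u p.1 + p.2 * v p.1 :=
      (hu.comp_measurable measurable_fst).add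
        ((measurable_snd.stronglyMeasurable).mul (hv.comp_measurable measurable_fst))
    exact (hc.comp_stronglyMeasurable h1).sub
      (hc.comp_stronglyMeasurable (hu.comp_measurable measurable_fst))
  have := hsm.norm
  simp only [Real.norm_eq_abs] at this
  exact this

end Aux

lemma memLp2_mul_integrable {S : Type*} [MeasurableSpace S] {μ : Measure S}
    {g h : S → ℝ} (hg : MemLp g 2 μ) (hh : MemLp h 2 μ) :
    Integrable (fun x => g x * h x) μ := by
  have := L2.integrable_inner (𝕜 := ℝ) (hg.toLp g) (hh.toLp h)
  refine this.congr ?_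
  filter_upwards [hg.coeFn_toLp, hh.coeFn_toLp] with x h1 h2
  simp [RCLike.inner_apply, h1, h2, mul_comm]

set_option synthInstance.maxHeartbeats 1000000 in
/-- On a finite measure space, if `f : ℝ → ℝ` is `C¹` with `f'` of linear growth, then
`F(u) = ∫ f(u) dμ` is Fréchet differentiable at every `u ∈ L²(S,μ)` with derivative
`F'(u)(v) = ∫ f'(u) v dμ`. -/
theorem frechet_differentiable_integral_functional
    {S : Type*} [MeasurableSpace S] (μ : Measure S) [IsFiniteMeasure μ]
    (f : ℝ → ℝ) (hf : ContDiff ℝ 1 f)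
    (C : ℝ) (hgrowth : ∀ t : ℝ, |deriv f t| ≤ C * (1 + |t|)) :
    ∀ u : Lp ℝ 2 μ, ∃ φ : Lp ℝ 2 μ →L[ℝ] ℝ,
      (∀ v : Lp ℝ 2 μ, φ v = ∫ x, deriv f (u x) * v x ∂μ) ∧
      HasFDerivAt (fun w : Lp ℝ 2 μ => ∫ x, f (w x) ∂μ) φ u := by
  intro u
  have hC : 0 ≤ C := le_trans (abs_nonneg _) (by simpa using hgrowth 0)
  have hc := hf.continuous_deriv le_rfl
  -- measurable representatives
  set m : Lp ℝ 2 μ → S → ℝ := fun w => (Lp.aestronglyMeasurable w).mk w with hm_def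
  have hm_meas : ∀ w : Lp ℝ 2 μ, StronglyMeasurable (m w) :=
    fun w => (Lp.aestronglyMeasurable w).stronglyMeasurable_mk
  have hm_ae : ∀ w : Lp ℝ 2 μ, (w : S → ℝ) =ᵐ[μ] m w :=
    fun w => (Lp.aestronglyMeasurable w).ae_eq_mk
  have hm_mem : ∀ w : Lp ℝ 2 μ, MemLp (m w) 2 μ :=
    fun w => (Lp.memLp w).ae_eq (hm_ae w)
  -- the derivative functional
  have hg0_mem : MemLp (fun x => deriv f (u x)) 2 μ := by
    have hmeas : AEStronglyMeasurable (fun x => deriv f (u x)) μ :=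
      hc.comp_aestronglyMeasurable (Lp.aestronglyMeasurable u)
    have hbound : MemLp (fun x => C * (1 + |(u : S → ℝ) x|)) 2 μ :=
      (((memLp_const (1:ℝ)).add (Lp.memLp u).abs).const_mul C)
    refine hbound.of_le hmeas (ae_of_all _ fun x => ?_)
    rw [Real.norm_eq_abs, Real.norm_eq_abs]
    refine (hgrowth _).trans (le_abs_self _)
  set g0 : Lp ℝ 2 μ := hg0_mem.toLp _ with hg0_def
  set φ : Lp ℝ 2 μ →L[ℝ] ℝ := innerSL ℝ g0 with hφ_def
  have hφ : ∀ v : Lp ℝ 2 μ, φ v = ∫ x, deriv f (u x) * v x ∂μ := by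
    intro v
    have h1 : φ v = ∫ x, (g0 : S → ℝ) x * (v : S → ℝ) x ∂μ := by
      rw [hφ_def, innerSL_apply_apply, L2.inner_def]
      simp [RCLike.inner_apply, mul_comm]
    rw [h1]
    refine integral_congr_ae ?_
    filter_upwards [hg0_mem.coeFn_toLp] with x hx
    rw [show (g0 : S → ℝ) x = deriv f (u x) from hx]
  -- integrability of f ∘ w
  have habs_f : ∀ y : ℝ, |f y| ≤ |f 0| + (|deriv f 0| + 2 * C) * |y| + C * |y| ^ 2 := by
    intro y
    have h1 := taylor_bound hf 0 y
    have h2 := h_le hf hC hgrowth 0 y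
    simp only [zero_add, abs_zero, mul_zero, add_zero] at h1 h2
    have h3 : |f y - f 0 - deriv f 0 * y| ≤ (C * (2 + |y|)) * |y| := by
      refine h1.trans (mul_le_mul_of_nonneg_right ?_ (abs_nonneg _))
      simpa using h2
    have h4 : |f y| ≤ |f 0| + |deriv f 0| * |y| + |f y - f 0 - deriv f 0 * y| := by
      have : f y = f 0 + deriv f 0 * y + (f y - f 0 - deriv f 0 * y) := by ring
      calc |f y| = |f 0 + deriv f 0 * y + (f y - f 0 - deriv f 0 * y)| := by rw [← this]
        _ ≤ |f 0 + deriv f 0 * y| + |f y - f 0 - deriv f 0 * y| := abs_add_le _ _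
        _ ≤ |f 0| + |deriv f 0 * y| + |f y - f 0 - deriv f 0 * y| := by
            have := abs_add_le (f 0) (deriv f 0 * y); linarith
        _ = |f 0| + |deriv f 0| * |y| + |f y - f 0 - deriv f 0 * y| := by rw [abs_mul]
    nlinarith [sq_abs y, abs_nonneg y]
  have hfw_int : ∀ w : Lp ℝ 2 μ, Integrable (fun x => f ((w : S → ℝ) x)) μ := by
    intro w
    have hw1 : Integrable (fun x => |(w : S → ℝ) x|) μ :=
      (memLp_one_iff_integrable.mp
        ((Lp.memLp w).mono_exponent (by norm_num))).abs
    have hw2 : Integrable (fun x => ((w : S → ℝ) x) ^ 2) μ := (Lp.memLp w).integrable_sq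
    have hdom : Integrable
        (fun x => |f 0| + (|deriv f 0| + 2 * C) * |(w : S → ℝ) x| + C * |(w : S → ℝ) x| ^ 2) μ := by
      have heq : (fun x => |f 0| + (|deriv f 0| + 2 * C) * |(w : S → ℝ) x|
            + C * |(w : S → ℝ) x| ^ 2)
          = fun x => (|f 0| + (|deriv f 0| + 2 * C) * |(w : S → ℝ) x|)
            + C * ((w : S → ℝ) x) ^ 2 := by
        funext x; rw [sq_abs]
      rw [heq]
      exact ((integrable_const _).add (hw1.const_mul _)).add (hw2.const_mul _)
    refine hdom.mono' (hf.continuous.comp_aestronglyMeasurable (Lp.aestronglyMeasurable w))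
      (ae_of_all _ fun x => ?_)
    rw [Real.norm_eq_abs]
    exact habs_f _
  -- the modulus function H
  set H : Lp ℝ 2 μ → S → ℝ := fun v x =>
    ∫ t in (0:ℝ)..1, |deriv f (m u x + t * m v x) - deriv f (m u x)| with hH_def
  have hH_sm : ∀ v, StronglyMeasurable (H v) := fun v => h_meas hf (hm_meas u) (hm_meas v)
  have hH_nonneg : ∀ v x, 0 ≤ H v x := fun v x => h_nonneg _ _
  have hH_le : ∀ v x, H v x ≤ C * (2 + 2 * |m u x| + |m v x|) :=
    fun v x => h_le hf hC hgrowth _ _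
  have hG_mem : ∀ v : Lp ℝ 2 μ, MemLp (fun x => C * (2 + 2 * |m u x| + |m v x|)) 2 μ := by
    intro v
    exact ((((memLp_const (2:ℝ)).add (((hm_mem u).abs).const_mul 2)).add
      ((hm_mem v).abs)).const_mul C)
  have hH_mem : ∀ v, MemLp (H v) 2 μ := by
    intro v
    refine (hG_mem v).of_le (hH_sm v).aestronglyMeasurable (ae_of_all _ fun x => ?_)
    rw [Real.norm_eq_abs, abs_of_nonneg (hH_nonneg v x), Real.norm_eq_abs]
    refine (hH_le v x).trans (le_abs_self _)
  set N : Lp ℝ 2 μ → ℝ := fun v => ‖(hH_mem v).toLp (H v)‖ with hN_def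
  have hN_eq : ∀ v, N v = (eLpNorm (H v) 2 μ).toReal := fun v => Lp.norm_toLp _ _
  -- Claim 1
  have claim1 : ∀ v : Lp ℝ 2 μ,
      |(∫ x, f ((u + v : Lp ℝ 2 μ) x) ∂μ) - (∫ x, f (u x) ∂μ) - φ v| ≤ N v * ‖v‖ := by
    intro v
    rw [hφ v]
    have I1 : Integrable (fun x => f (m u x + m v x)) μ := by
      refine (hfw_int (u + v)).congr ?_
      filter_upwards [Lp.coeFn_add u v, hm_ae u, hm_ae v] with x h1 h2 h3
      rw [h1]; simp only [Pi.add_apply]; rw [h2, h3]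
    have I2 : Integrable (fun x => f (m u x)) μ := by
      refine (hfw_int u).congr ?_
      filter_upwards [hm_ae u] with x h2; rw [h2]
    have hg0'_mem : MemLp (fun x => deriv f (m u x)) 2 μ := by
      refine hg0_mem.ae_eq ?_
      filter_upwards [hm_ae u] with x h2; rw [h2]
    have I3 : Integrable (fun x => deriv f (m u x) * m v x) μ :=
      memLp2_mul_integrable hg0'_mem (hm_mem v)
    have I4 : Integrable (fun x => H v x * |m v x|) μ :=
      memLp2_mul_integrable (hH_mem v) ((hm_mem v).abs)
    have stepA : (∫ x, f ((u + v : Lp ℝ 2 μ) x) ∂μ) = ∫ x, f (m u x + m v x) ∂μ := by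
      refine integral_congr_ae ?_
      filter_upwards [Lp.coeFn_add u v, hm_ae u, hm_ae v] with x h1 h2 h3
      rw [h1]; simp only [Pi.add_apply]; rw [h2, h3]
    have stepB : (∫ x, f (u x) ∂μ) = ∫ x, f (m u x) ∂μ := by
      refine integral_congr_ae ?_
      filter_upwards [hm_ae u] with x h2; rw [h2]
    have stepC : (∫ x, deriv f (u x) * v x ∂μ) = ∫ x, deriv f (m u x) * m v x ∂μ := by
      refine integral_congr_ae ?_
      filter_upwards [hm_ae u, hm_ae v] with x h2 h3; rw [h2, h3]
    have I12 : Integrable (fun x => f (m u x + m v x) - f (m u x)) μ := I1.sub I2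
    rw [stepA, stepB, stepC, ← integral_sub I1 I2, ← integral_sub I12 I3]
    have key : |∫ x, (f (m u x + m v x) - f (m u x) - deriv f (m u x) * m v x) ∂μ|
        ≤ ∫ x, H v x * |m v x| ∂μ := by
      calc |∫ x, (f (m u x + m v x) - f (m u x) - deriv f (m u x) * m v x) ∂μ|
          ≤ ∫ x, |f (m u x + m v x) - f (m u x) - deriv f (m u x) * m v x| ∂μ := by
            rw [← Real.norm_eq_abs]
            refine (norm_integral_le_integral_norm _).trans_eq ?_
            simp [Real.norm_eq_abs]
        _ ≤ ∫ x, H v x * |m v x| ∂μ := by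
            have I123 : Integrable
                (fun x => |f (m u x + m v x) - f (m u x) - deriv f (m u x) * m v x|) μ :=
              (I12.sub I3).abs
            refine integral_mono_ae I123 I4 (ae_of_all _ fun x => ?_)
            exact taylor_bound hf (m u x) (m v x)
    refine key.trans ?_
    -- Cauchy-Schwarz
    have h2 : (∫ x, H v x * |m v x| ∂μ)
        = (inner ℝ ((hH_mem v).toLp (H v)) (((hm_mem v).abs).toLp |m v|) : ℝ) := by
      rw [L2.inner_def]
      refine integral_congr_ae ?_
      filter_upwards [(hH_mem v).coeFn_toLp, ((hm_mem v).abs).coeFn_toLp] with x ha hb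
      rw [RCLike.inner_apply, ha, hb]
      simp [mul_comm]
    rw [h2]
    refine (real_inner_le_norm _ _).trans ?_
    refine mul_le_mul_of_nonneg_left (le_of_eq ?_) (norm_nonneg _)
    rw [Lp.norm_toLp, Lp.norm_def]
    congr 1
    have : eLpNorm (|m v| : S → ℝ) 2 μ = eLpNorm (m v) 2 μ := by
      rw [show (|m v| : S → ℝ) = fun x => ‖m v x‖ from funext fun x => (Real.norm_eq_abs _).symm]
      exact eLpNorm_norm _
    rw [this]
    exact eLpNorm_congr_ae (hm_ae v).symm
  -- Claim 2
  have claim2 : Tendsto N (nhds 0) (nhds 0) := by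
    have hcg : (nhds (0 : Lp ℝ 2 μ)).IsCountablyGenerated :=
      FirstCountableTopology.nhds_generated_countable 0
    rw [@Filter.tendsto_iff_seq_tendsto _ _ _ _ _ hcg]
    intro vs hvs
    refine Filter.tendsto_of_subseq_tendsto fun ns hns => ?_
    set w : ℕ → Lp ℝ 2 μ := fun n => vs (ns n) with hw_def
    have hw : Tendsto w atTop (nhds 0) := hvs.comp hns
    have hw_norm : Tendsto (fun n => ‖w n‖) atTop (nhds 0) := by
      rw [← tendsto_zero_iff_norm_tendsto_zero]; exact hw
    have hw_eLp : Tendsto (fun n => eLpNorm (w n : S → ℝ) 2 μ) atTop (nhds 0) := by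
      have h1 := ENNReal.tendsto_ofReal hw_norm
      rw [ENNReal.ofReal_zero] at h1
      refine h1.congr fun n => ?_
      rw [Lp.norm_def, ENNReal.ofReal_toReal (Lp.eLpNorm_ne_top _)]
    have hwm_eLp : Tendsto (fun n => eLpNorm (m (w n) - 0) 2 μ) atTop (nhds 0) := by
      refine hw_eLp.congr fun n => ?_
      rw [sub_zero]
      exact eLpNorm_congr_ae (hm_ae (w n))
    have htim : TendstoInMeasure μ (fun n => m (w n)) atTop 0 :=
      tendstoInMeasure_of_tendsto_eLpNorm (by norm_num : (2:ENNReal) ≠ 0)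
        (fun n => (hm_meas _).aestronglyMeasurable) aestronglyMeasurable_const hwm_eLp
    obtain ⟨ms, hms_mono, hms_ae⟩ := htim.exists_seq_tendsto_ae
    refine ⟨ms, ?_⟩
    have hwms_eLp : Tendsto (fun k => eLpNorm (w (ms k) : S → ℝ) 2 μ) atTop (nhds 0) :=
      hw_eLp.comp hms_mono.tendsto_atTop
    -- a.e. convergence of H along the subsequence
    have hae_H : ∀ᵐ x ∂μ, Tendsto (fun k => H (w (ms k)) x) atTop (nhds 0) := by
      filter_upwards [hms_ae] with x hx
      exact h_tendsto hf (m u x) (by simpa using hx)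
    -- uniform integrability
    have hG_tendsto : Tendsto (fun k => eLpNorm
        ((fun x => C * (2 + 2 * |m u x| + |m (w (ms k)) x|))
          - fun x => C * (2 + 2 * |m u x|)) 2 μ) atTop (nhds 0) := by
      have heq : ∀ k, ((fun x => C * (2 + 2 * |m u x| + |m (w (ms k)) x|))
            - fun x => C * (2 + 2 * |m u x|)) = C • fun x => |m (w (ms k)) x| := by
        intro k; funext x
        simp only [Pi.sub_apply, Pi.smul_apply, smul_eq_mul]
        ring
      simp_rw [heq, eLpNorm_const_smul]
      have habs : ∀ k, eLpNorm (fun x => |m (w (ms k)) x|) 2 μ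
          = eLpNorm (w (ms k) : S → ℝ) 2 μ := by
        intro k
        rw [show (fun x => |m (w (ms k)) x|) = fun x => ‖m (w (ms k)) x‖ from
          funext fun x => (Real.norm_eq_abs _).symm, eLpNorm_norm]
        exact eLpNorm_congr_ae (hm_ae _).symm
      simp_rw [habs]
      have := ENNReal.Tendsto.const_mul (a := ((‖C‖₊ : NNReal) : ENNReal)) hwms_eLp
        (Or.inr ENNReal.coe_ne_top)
      simpa [enorm_eq_nnnorm] using this
    have hui_G : UnifIntegrable
        (fun k x => C * (2 + 2 * |m u x| + |m (w (ms k)) x|)) 2 μ :=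
      unifIntegrable_of_tendsto_Lp (by norm_num) (by norm_num)
        (fun k => hG_mem _) (((memLp_const (2:ℝ)).add (((hm_mem u).abs).const_mul 2)).const_mul C)
        hG_tendsto
    have hui_H : UnifIntegrable (fun k => H (w (ms k))) 2 μ := by
      intro ε hε
      obtain ⟨δ, hδ, hδ'⟩ := hui_G hε
      refine ⟨δ, hδ, fun k s hs hμs => ?_⟩
      refine le_trans (eLpNorm_mono fun x => ?_) (hδ' k s hs hμs)
      by_cases hx : x ∈ s
      · rw [Set.indicator_of_mem hx, Set.indicator_of_mem hx, Real.norm_eq_abs,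
          Real.norm_eq_abs, abs_of_nonneg (hH_nonneg _ x)]
        refine (hH_le _ x).trans (le_abs_self _)
      · rw [Set.indicator_of_notMem hx, Set.indicator_of_notMem hx]
    have hfinal := tendsto_Lp_finite_of_tendsto_ae (μ := μ) (p := 2) (by norm_num)
      (by norm_num) (fun k => (hH_sm _).aestronglyMeasurable) MemLp.zero hui_H
      (by filter_upwards [hae_H] with x hx; simpa using hx)
    have htoReal : Tendsto (fun k => (eLpNorm (H (w (ms k))) 2 μ).toReal) atTop (nhds 0) := by
      have h1 : ∀ k, eLpNorm (H (w (ms k)) - 0) 2 μ = eLpNorm (H (w (ms k))) 2 μ := by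
        intro k; rw [sub_zero]
      simp_rw [h1] at hfinal
      have := (ENNReal.tendsto_toReal (by norm_num : (0:ENNReal) ≠ ⊤)).comp hfinal
      simpa [Function.comp_def] using this
    exact htoReal.congr fun k => (hN_eq (w (ms k))).symm
  -- conclude
  refine ⟨φ, hφ, ?_⟩
  rw [hasFDerivAt_iff_isLittleO_nhds_zero, Asymptotics.isLittleO_iff]
  intro c hc'
  have hev : ∀ᶠ v in nhds (0 : Lp ℝ 2 μ), N v < c := claim2.eventually_lt_const hc'
  filter_upwards [hev] with v hv
  rw [Real.norm_eq_abs]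
  refine (claim1 v).trans ?_
  exact mul_le_mul_of_nonneg_right hv.le (norm_nonneg v)
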